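/- arXiv:1905.04826 — 2 statements merged into one kernel-verified Lean document; each statement's English description precedes it below -/
import Mathlib

section
/- Let $S_0 = k[x_0,\dots,x_{n+e}]$, let $J = (x_0,\dots,x_{e-1})$, let $u$ be a monomial of degree $r$ in $x_0,\dots,x_{e-1}$ and $v$ a monomial of positive degree in $x_e,\dots,x_{n+e}$. Then $\deg(S_0/(J^{r+1}+(uv))) = \binom{e+r}{e} - 1$, where $\deg$ denotes the degree (multiplicity) of the graded ring. -/
open MvPolynomial Filter

/-- The irrelevant maximal ideal `(x_0, ..., x_{N-1})` of the polynomial ring. -/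
noncomputable def varIdeal (k : Type) [Field k] (N : ℕ) : Ideal (MvPolynomial (Fin N) k) :=
  Ideal.span (Set.range MvPolynomial.X)

/-- An ideal of the polynomial ring is homogeneous. -/
def IsHomIdeal {k : Type} [Field k] {N : ℕ} (I : Ideal (MvPolynomial (Fin N) k)) : Prop :=
  ∀ f ∈ I, ∀ d : ℕ, MvPolynomial.homogeneousComponent d f ∈ I

/-- `f` is a monomial (with coefficient 1) of degree `d` all of whose variables satisfy `P`. -/
def IsMonomialSupp {k : Type} [Field k] {N : ℕ} (f : MvPolynomial (Fin N) k)
    (P : Fin N → Prop) (d : ℕ) : Prop :=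
  ∃ m : Fin N →₀ ℕ, f = MvPolynomial.monomial m 1 ∧ (∀ i, m i ≠ 0 → P i) ∧
    (m.sum fun _ e => e) = d

/-- The ideal generated by the first `e` variables. -/
noncomputable def lowIdeal (k : Type) [Field k] (N e : ℕ) : Ideal (MvPolynomial (Fin N) k) :=
  Ideal.span { f | ∃ i : Fin N, (i : ℕ) < e ∧ f = MvPolynomial.X i }

/-- `β` is the table of graded Betti numbers of a minimal graded free resolution of `S/I`:
there are graded free modules `F i` with `β i j` generators in degree `j`, degree-preserving
differentials with entries vanishing at the irrelevant maximal ideal (minimality),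
forming an exact complex resolving `S/I`. -/
def IsBettiTable {k : Type} [Field k] {N : ℕ} (I : Ideal (MvPolynomial (Fin N) k))
    (β : ℕ → ℕ → ℕ) : Prop :=
  ∃ (φ : ∀ i : ℕ, ((Σ j : ℕ, Fin (β (i+1) j)) →₀ MvPolynomial (Fin N) k) →ₗ[MvPolynomial (Fin N) k]
         ((Σ j : ℕ, Fin (β i j)) →₀ MvPolynomial (Fin N) k))
    (ε : ((Σ j : ℕ, Fin (β 0 j)) →₀ MvPolynomial (Fin N) k) →ₗ[MvPolynomial (Fin N) k]
         (MvPolynomial (Fin N) k ⧸ I)),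
    Function.Surjective ε ∧
    LinearMap.ker ε = LinearMap.range (φ 0) ∧
    (∀ i, LinearMap.ker (φ i) = LinearMap.range (φ (i+1))) ∧
    (∀ p : Σ j : ℕ, Fin (β 0 j), ∃ g : MvPolynomial (Fin N) k,
        g.IsHomogeneous p.1 ∧ ε (Finsupp.single p 1) = Ideal.Quotient.mk I g) ∧
    (∀ i, ∀ p : Σ j : ℕ, Fin (β (i+1) j), ∀ q : Σ j : ℕ, Fin (β i j),
        ((φ i (Finsupp.single p 1)) q).IsHomogeneous (p.1 - q.1) ∧
        (q.1 ≤ p.1 ∨ (φ i (Finsupp.single p 1)) q = 0)) ∧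
    (∀ i, ∀ p : Σ j : ℕ, Fin (β (i+1) j), ∀ q : Σ j : ℕ, Fin (β i j),
        MvPolynomial.constantCoeff ((φ i (Finsupp.single p 1)) q) = 0)

/-- `β` is the table of graded Betti numbers of the ideal `I`
(obtained from a minimal free resolution of `S/I` by shifting the homological index). -/
def IdealBetti {k : Type} [Field k] {N : ℕ} (I : Ideal (MvPolynomial (Fin N) k))
    (β : ℕ → ℕ → ℕ) : Prop :=
  ∃ βQ : ℕ → ℕ → ℕ, IsBettiTable I βQ ∧ βQ 0 0 = 1 ∧ (∀ j, 0 < j → βQ 0 j = 0) ∧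
    ∀ i j, β i j = βQ (i+1) j

/-- The ideal `I` has a `d`-linear minimal free resolution. -/
def HasLinearRes {k : Type} [Field k] {N : ℕ} (I : Ideal (MvPolynomial (Fin N) k))
    (d : ℕ) : Prop :=
  ∃ β : ℕ → ℕ → ℕ, IdealBetti I β ∧ ∀ i j, β i j ≠ 0 → j = i + d

/-- The ideal generated by the homogeneous elements of degree `d` in `I`. -/
noncomputable def componentIdeal {k : Type} [Field k] {N : ℕ} (I : Ideal (MvPolynomial (Fin N) k))
    (d : ℕ) : Ideal (MvPolynomial (Fin N) k) :=
  Ideal.span { f | f ∈ I ∧ f.IsHomogeneous d }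

/-- `I` is componentwise linear. -/
def ComponentwiseLinear {k : Type} [Field k] {N : ℕ}
    (I : Ideal (MvPolynomial (Fin N) k)) : Prop :=
  ∀ d : ℕ, 0 < d → HasLinearRes (componentIdeal I d) d

/-- The Castelnuovo-Mumford regularity of `S/I` equals `ρ`:
`ρ = max { j - i : β_{i,j}(S/I) ≠ 0 }`. -/
def HasRegularity {k : Type} [Field k] {N : ℕ} (I : Ideal (MvPolynomial (Fin N) k))
    (ρ : ℕ) : Prop :=
  ∃ β : ℕ → ℕ → ℕ, IsBettiTable I β ∧ (∀ i j, β i j ≠ 0 → j ≤ i + ρ) ∧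
    ∃ i j, β i j ≠ 0 ∧ j = i + ρ

/-- The Hilbert function of `S/I` : `dim_k (S/I)_t`. -/
noncomputable def hilb {k : Type} [Field k] {N : ℕ} (I : Ideal (MvPolynomial (Fin N) k))
    (t : ℕ) : ℕ :=
  Module.finrank k (MvPolynomial.homogeneousSubmodule (Fin N) k t) -
  Module.finrank k
    ((Submodule.restrictScalars k (I : Submodule (MvPolynomial (Fin N) k) (MvPolynomial (Fin N) k))
      ⊓ MvPolynomial.homogeneousSubmodule (Fin N) k t : Submodule k (MvPolynomial (Fin N) k)))

/-- `S/I`, of Krull dimension `dim`, has degree (multiplicity) `D`: the Hilbert polynomial has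
degree `dim - 1` and leading coefficient `D / (dim - 1)!`. -/
def HasDegree {k : Type} [Field k] {N : ℕ} (I : Ideal (MvPolynomial (Fin N) k))
    (dim D : ℕ) : Prop :=
  ∃ p : Polynomial ℚ, p.natDegree = dim - 1 ∧
    p.leadingCoeff * (Nat.factorial (dim - 1) : ℚ) = D ∧
    ∀ᶠ t : ℕ in atTop, (hilb I t : ℚ) = p.eval (t : ℚ)

/-- The (graded) depth of `S/I` is at least `t`: there is a regular sequence of length `t`
on `S/I` inside the irrelevant maximal ideal. -/
def HasDepthGE {k : Type} [Field k] {N : ℕ} (I : Ideal (MvPolynomial (Fin N) k))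
    (t : ℕ) : Prop :=
  ∃ rs : List (MvPolynomial (Fin N) k), rs.length = t ∧ (∀ x ∈ rs, x ∈ varIdeal k N) ∧
    RingTheory.Sequence.IsRegular (MvPolynomial (Fin N) k ⧸ I) rs

/-- The depth of `S/I` is exactly `t`. -/
def HasDepth {k : Type} [Field k] {N : ℕ} (I : Ideal (MvPolynomial (Fin N) k))
    (t : ℕ) : Prop :=
  HasDepthGE I t ∧ ¬ HasDepthGE I (t+1)

/-- The reduction number of `R = S/I` (of dimension `d`) is `r`: the least `s` such that for
some Noether normalization by `d` linear forms `ℓ`, `m^{s+1} ⊆ (ℓ)·m^s` holds in `R`. -/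
def HasReductionNumber {k : Type} [Field k] {N : ℕ} (I : Ideal (MvPolynomial (Fin N) k))
    (d r : ℕ) : Prop :=
  IsLeast { s : ℕ | ∃ ℓ : Fin d → MvPolynomial (Fin N) k, (∀ i, (ℓ i).IsHomogeneous 1) ∧
    (varIdeal k N) ^ (s+1) ≤ I + Ideal.span (Set.range ℓ) * (varIdeal k N) ^ s } r

/-- `S/I` is Cohen-Macaulay: depth equals Krull dimension. -/
def IsCM {k : Type} [Field k] {N : ℕ} (I : Ideal (MvPolynomial (Fin N) k)) : Prop :=
  ∃ d : ℕ, ringKrullDim (MvPolynomial (Fin N) k ⧸ I) = d ∧ HasDepthGE I d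

/-- The subscheme defined by `I` is non-degenerate: `I` contains no nonzero linear form. -/
def Nondegenerate {k : Type} [Field k] {N : ℕ} (I : Ideal (MvPolynomial (Fin N) k)) : Prop :=
  ∀ f ∈ I, f.IsHomogeneous 1 → f = 0

/-!
`I = J^{r+1} + (x^μ x^ν)` is a monomial ideal: `x^m ∈ I` iff the part of `m` in the first `e`
variables has degree `> r` or `μ + ν ≤ m`. Hence `dim_k (S/I)_t` counts the remaining monomials of
degree `t`. Those whose low part has degree `s ≤ r` are products of a low monomial of degree `s`
and a high one of degree `t - s`, giving `∑_{s ≤ r} multichoose e s * C(t - s + n, n)`. Among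
them, the multiples of `x^{μ+ν}` have low part exactly `μ`, so they are `x^{μ+ν}` times the high
monomials of degree `t - r - deg ν`. Each `C(t - s + n, n)` is a polynomial in `t` with leading
term `t^n / n!`, and `∑_{s ≤ r} multichoose e s = C(e + r, e)`, so the leading coefficient of the
Hilbert polynomial is `(C(e + r, e) - 1) / n!`.
-/

open Finset

namespace Finsupp

variable {σ : Type*} (p : σ → Prop) [DecidablePred p]

lemma filter_le (m : σ →₀ ℕ) : m.filter p ≤ m := fun i => by
  rw [filter_apply]; split_ifs <;> simp

variable {p} in
lemma le_filter_of_le {s m : σ →₀ ℕ} (hs : ∀ i, s i ≠ 0 → p i) (h : s ≤ m) :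
    s ≤ m.filter p := by
  rw [← (filter_eq_self_iff p s).2 hs]
  exact fun i => by simp only [filter_apply]; split_ifs <;> simp [h i]

lemma eq_of_le_of_degree_le {a b : σ →₀ ℕ} (h : a ≤ b) (hd : b.degree ≤ a.degree) : a = b := by
  obtain ⟨c, rfl⟩ := le_iff_exists_add.mp h
  rw [map_add] at hd
  rw [(degree_eq_zero_iff c).1 (by omega), add_zero]

lemma degree_filter_add_degree_filter_not (m : σ →₀ ℕ) :
    (m.filter p).degree + (m.filter (¬ p ·)).degree = m.degree := by
  rw [← map_add, filter_add_filter_not]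

lemma le_degree_filter_iff (a : ℕ) (m : σ →₀ ℕ) :
    a ≤ (m.filter p).degree ↔ ∃ s ≤ m, s.degree = a ∧ ↑s.support ⊆ {i | p i} := by
  constructor
  · intro h
    obtain ⟨s, hs, rfl⟩ := exists_le_degree_eq _ a h
    exact ⟨s, hs.trans (filter_le p m), rfl,
      fun i hi => (Finset.mem_filter.1 (support_mono hs hi)).2⟩
  · rintro ⟨s, hsm, rfl, hs⟩
    exact degree_mono (le_filter_of_le (fun i hi => hs (mem_support_iff.2 hi)) hsm)

variable {p} in
lemma filter_add_of_supported {w h : σ →₀ ℕ} (hw : ∀ i, w i ≠ 0 → p i)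
    (hh : ∀ i, h i ≠ 0 → ¬ p i) : (w + h).filter p = w ∧ (w + h).filter (¬ p ·) = h := by
  rw [filter_add, filter_add, (filter_eq_self_iff p w).2 hw, (filter_eq_self_iff _ h).2 hh,
    (filter_eq_zero_iff p h).2, (filter_eq_zero_iff _ w).2]
  · simp
  · exact fun i hi => by_contra fun h0 => hi (hw i h0)
  · exact fun i hi => by_contra fun h0 => hh i h0 hi

end Finsupp

section MonomialIdeals

open MvPolynomial

variable {σ R : Type*} [CommSemiring R]

lemma span_X_image_pow (s : Set σ) (a : ℕ) :
    Ideal.span (X '' s : Set (MvPolynomial σ R)) ^ a =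
      Ideal.span ((monomial · 1) '' {x : σ →₀ ℕ | x.degree = a ∧ ↑x.support ⊆ s}) := by
  rw [Ideal.span, Submodule.span_pow, Finsupp.image_pow_eq_finsuppProd_image]
  simp [monomial_eq]

lemma mem_span_X_image_pow_sup_span_monomial_iff (p : σ → Prop) [DecidablePred p]
    (a : ℕ) (c : σ →₀ ℕ) (f : MvPolynomial σ R) :
    f ∈ Ideal.span (X '' {i | p i}) ^ a + Ideal.span {monomial c 1} ↔
      ∀ m ∈ f.support, a ≤ (m.filter p).degree ∨ c ≤ m := by
  rw [span_X_image_pow, Ideal.add_eq_sup, ← Ideal.span_union,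
    show ({monomial c 1} : Set (MvPolynomial σ R)) = (fun x => monomial x 1) '' {c} from
      by rw [Set.image_singleton], ← Set.image_union, mem_ideal_span_monomial_image]
  simp only [Set.mem_union, Set.mem_ofPred_eq, Set.mem_singleton_iff,
    Finsupp.le_degree_filter_iff]
  grind

end MonomialIdeals

section Counting

variable {σ : Type*} [Fintype σ] [DecidableEq σ] (p : σ → Prop) [DecidablePred p]

lemma Finset.mem_finsuppAntidiag_filter_univ {d : ℕ} {m : σ →₀ ℕ} :
    m ∈ ({i | p i} : Finset σ).finsuppAntidiag d ↔ m.degree = d ∧ ∀ i, m i ≠ 0 → p i := by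
  rw [Finset.mem_finsuppAntidiag']
  simp [Finset.subset_iff, Finsupp.degree_apply, Finsupp.sum]

lemma Finset.mem_univ_finsuppAntidiag {d : ℕ} {m : σ →₀ ℕ} :
    m ∈ (univ : Finset σ).finsuppAntidiag d ↔ m.degree = d := by
  simp [Finsupp.degree_eq_sum]

lemma card_filter_degree_filter_eq {s t : ℕ} (hst : s ≤ t) :
    #{m ∈ (univ : Finset σ).finsuppAntidiag t | (m.filter p).degree = s} =
      #(({i | p i} : Finset σ).finsuppAntidiag s) *
        #(({i | ¬ p i} : Finset σ).finsuppAntidiag (t - s)) := by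
  rw [← card_product]
  refine card_nbij' (fun m => (m.filter p, m.filter (¬ p ·))) (fun x => x.1 + x.2)
    ?_ ?_ ?_ ?_
  · intro m hm
    simp only [coe_filter, Set.mem_ofPred_eq, mem_univ_finsuppAntidiag] at hm
    have := Finsupp.degree_filter_add_degree_filter_not p m
    simp only [coe_product, Set.mem_prod, mem_coe, mem_finsuppAntidiag_filter_univ]
    refine ⟨⟨hm.2, fun i hi => ?_⟩, by omega, fun i hi => ?_⟩
    · exact by_contra fun h => hi (Finsupp.filter_apply_neg _ _ h)
    · exact fun h => hi (Finsupp.filter_apply_neg _ _ (not_not.2 h))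
  · rintro ⟨w, h⟩ hwh
    simp only [coe_product, Set.mem_prod, mem_coe, mem_finsuppAntidiag_filter_univ] at hwh
    simp only [coe_filter, Set.mem_ofPred_eq, mem_univ_finsuppAntidiag, map_add,
      (Finsupp.filter_add_of_supported hwh.1.2 hwh.2.2).1]
    omega
  · intro m _
    exact Finsupp.filter_add_filter_not m p
  · rintro ⟨w, h⟩ hwh
    simp only [coe_product, Set.mem_prod, mem_coe, mem_finsuppAntidiag_filter_univ] at hwh
    simp only [Finsupp.filter_add_of_supported hwh.1.2 hwh.2.2]

lemma card_filter_degree_filter_le {r t : ℕ} (hrt : r ≤ t) :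
    #{m ∈ (univ : Finset σ).finsuppAntidiag t | (m.filter p).degree ≤ r} =
      ∑ s ∈ range (r + 1), #(({i | p i} : Finset σ).finsuppAntidiag s) *
        #(({i | ¬ p i} : Finset σ).finsuppAntidiag (t - s)) := by
  rw [card_eq_sum_card_fiberwise (f := fun m => (m.filter p).degree) (t := range (r + 1))
    (s := {m ∈ (univ : Finset σ).finsuppAntidiag t | (m.filter p).degree ≤ r})
    (fun m hm => mem_range_succ_iff.2 (mem_filter.1 hm).2)]
  refine sum_congr rfl fun s hs => ?_
  rw [filter_filter, ← card_filter_degree_filter_eq p ((mem_range_succ_iff.1 hs).trans hrt)]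
  congr 1
  refine filter_congr fun m _ => ?_
  constructor
  · exact fun h => h.2
  · rintro rfl
    exact ⟨mem_range_succ_iff.1 hs, rfl⟩

variable {p} in
lemma card_filter_degree_filter_le_and_le {μ ν : σ →₀ ℕ} (hμ : ∀ i, μ i ≠ 0 → p i)
    (hν : ∀ i, ν i ≠ 0 → ¬ p i) {t : ℕ} (ht : μ.degree + ν.degree ≤ t) :
    #{m ∈ (univ : Finset σ).finsuppAntidiag t | (m.filter p).degree ≤ μ.degree ∧ μ + ν ≤ m} =
      #(({i | ¬ p i} : Finset σ).finsuppAntidiag (t - (μ.degree + ν.degree))) := by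
  refine card_nbij' (fun m => m - (μ + ν)) (fun h => μ + ν + h) ?_ ?_ ?_ ?_
  · intro m hm
    simp only [coe_filter, Set.mem_ofPred_eq, mem_univ_finsuppAntidiag] at hm
    obtain ⟨hmt, hmμ, hle⟩ := hm
    have hfilter : m.filter p = μ := (Finsupp.eq_of_le_of_degree_le
      (Finsupp.le_filter_of_le hμ (le_self_add.trans hle)) hmμ).symm
    have hdeg := congrArg Finsupp.degree (add_tsub_cancel_of_le hle)
    rw [map_add, map_add] at hdeg
    simp only [mem_coe, mem_finsuppAntidiag_filter_univ]
    refine ⟨by omega, fun i hi hpi => hi ?_⟩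
    rw [Finsupp.tsub_apply, Finsupp.add_apply, ← Finsupp.filter_apply_pos p m hpi, hfilter]
    omega
  · intro h hh
    simp only [mem_coe, mem_finsuppAntidiag_filter_univ] at hh
    have hνh : ∀ i, (ν + h) i ≠ 0 → ¬ p i := fun i hi => by
      by_cases hνi : ν i = 0
      · exact hh.2 i (by simpa [hνi] using hi)
      · exact hν i hνi
    simp only [coe_filter, Set.mem_ofPred_eq, mem_univ_finsuppAntidiag, map_add, add_assoc,
      (Finsupp.filter_add_of_supported hμ hνh).1]
    exact ⟨by omega, le_rfl, by rw [← add_assoc]; exact le_self_add⟩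
  · intro m hm
    exact add_tsub_cancel_of_le (mem_filter.1 hm).2.2
  · intro h _
    exact add_tsub_cancel_left _ _

variable {p} in
lemma card_filter_not_add_one_le_degree_filter_or_le_add_card {μ ν : σ →₀ ℕ}
    (hμ : ∀ i, μ i ≠ 0 → p i) (hν : ∀ i, ν i ≠ 0 → ¬ p i) {t : ℕ}
    (ht : μ.degree + ν.degree ≤ t) :
    #{m ∈ (univ : Finset σ).finsuppAntidiag t |
        ¬ (μ.degree + 1 ≤ (m.filter p).degree ∨ μ + ν ≤ m)} +
      #(({i | ¬ p i} : Finset σ).finsuppAntidiag (t - (μ.degree + ν.degree))) =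
      ∑ s ∈ range (μ.degree + 1), #(({i | p i} : Finset σ).finsuppAntidiag s) *
        #(({i | ¬ p i} : Finset σ).finsuppAntidiag (t - s)) := by
  rw [← card_filter_degree_filter_le_and_le hμ hν ht, ← card_filter_degree_filter_le p (by omega),
    ← card_filter_add_card_filter_not (fun m => μ + ν ≤ m)
      (s := {m ∈ (univ : Finset σ).finsuppAntidiag t | (m.filter p).degree ≤ μ.degree}),
    filter_filter, filter_filter, add_comm]
  congr 2
  exact filter_congr fun m _ => by grind

end Counting

section Hilbert

open MvPolynomial

variable {k : Type} [Field k] {N : ℕ}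

lemma finrank_restrictSupport_coe (s : Finset (Fin N →₀ ℕ)) :
    Module.finrank k (restrictSupport k (s : Set (Fin N →₀ ℕ))) = #s := by
  rw [Module.finrank_eq_card_basis (basisRestrictSupport k _)]
  simp

lemma hilb_eq_card_filter_not (I : Ideal (MvPolynomial (Fin N) k))
    (P : (Fin N →₀ ℕ) → Prop) [DecidablePred P] (hI : ∀ f, f ∈ I ↔ ∀ m ∈ f.support, P m)
    (t : ℕ) : hilb I t = #{m ∈ (univ : Finset (Fin N)).finsuppAntidiag t | ¬ P m} := by
  set A := (univ : Finset (Fin N)).finsuppAntidiag t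
  have hhom : homogeneousSubmodule (Fin N) k t = restrictSupport k (A : Set (Fin N →₀ ℕ)) := by
    rw [show (A : Set (Fin N →₀ ℕ)) = {m | m.degree = t} from
      Set.ext fun _ => Finset.mem_univ_finsuppAntidiag]
    exact homogeneousSubmodule_eq_finsupp_supported (Fin N) k t
  have hinf : (Submodule.restrictScalars k (I : Submodule (MvPolynomial (Fin N) k) _) ⊓
      homogeneousSubmodule (Fin N) k t : Submodule k (MvPolynomial (Fin N) k)) =
      restrictSupport k (({m ∈ A | P m} : Finset _) : Set (Fin N →₀ ℕ)) := by
    ext f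
    simp only [Submodule.mem_inf, Submodule.restrictScalars_mem, hI, hhom,
      mem_restrictSupport_iff, Finset.coe_filter, Set.subset_def, Finset.mem_coe,
      Set.mem_ofPred_eq]
    grind
  rw [hilb, hinf, hhom, finrank_restrictSupport_coe, finrank_restrictSupport_coe,
    ← Finset.card_filter_add_card_filter_not P]
  exact Nat.add_sub_cancel_left _ _

end Hilbert

section HilbertPolynomial

open Polynomial

variable {k : Type} [Field k] {N : ℕ}

lemma hasDegree_of_eventually_hilb_eq_eval (I : Ideal (MvPolynomial (Fin N) k)) {n D : ℕ}
    (q : ℚ[X]) (hq : q.natDegree ≤ n) (hcoeff : q.coeff n * n.factorial = D) (hD : D ≠ 0)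
    (h : ∀ᶠ t : ℕ in atTop, (hilb I t : ℚ) = q.eval (t : ℚ)) :
    HasDegree I (n + 1) D := by
  have hqn : q.coeff n ≠ 0 := by
    rintro h0
    rw [h0, zero_mul] at hcoeff
    exact hD (by exact_mod_cast hcoeff.symm)
  have hnat : q.natDegree = n := natDegree_eq_of_le_of_coeff_ne_zero hq hqn
  exact ⟨q, hnat, by rwa [Nat.add_sub_cancel, leadingCoeff, hnat], h⟩

lemma hasDegree_of_eventually_hilb_eq_sum_choose (I : Ideal (MvPolynomial (Fin N) k))
    {n r d D : ℕ} (c : ℕ → ℕ) (hc : ∑ s ∈ range (r + 1), c s = D + 1) (hD : D ≠ 0)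
    (h : ∀ᶠ t : ℕ in atTop, (hilb I t : ℚ) =
      ∑ s ∈ range (r + 1), (c s : ℚ) * (t - s + n).choose n - (t - d + n).choose n) :
    HasDegree I (n + 1) D := by
  refine hasDegree_of_eventually_hilb_eq_eval I
    (∑ s ∈ range (r + 1), (c s : ℚ) • preHilbertPoly ℚ n s - preHilbertPoly ℚ n d) ?_ ?_ hD ?_
  · refine (natDegree_sub_le _ _).trans (max_le ?_ (natDegree_preHilbertPoly ℚ n d).le)
    exact natDegree_sum_le_of_forall_le _ _ fun s _ =>
      (natDegree_smul_le _ _).trans (natDegree_preHilbertPoly ℚ n s).le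
  · simp only [Polynomial.coeff_sub, finsetSum_coeff, Polynomial.coeff_smul,
      coeff_preHilbertPoly_self, smul_eq_mul, ← sum_mul, ← Nat.cast_sum, hc]
    field_simp
    push_cast
    ring
  · filter_upwards [h, eventually_ge_atTop (max r d)] with t ht hrd
    rw [ht, Polynomial.eval_sub, eval_finsetSum,
      preHilbertPoly_eq_choose_sub_add ℚ n (le_of_max_le_right hrd)]
    congr 1
    refine sum_congr rfl fun s hs => ?_
    rw [Polynomial.eval_smul, preHilbertPoly_eq_choose_sub_add ℚ n
      ((mem_range_succ_iff.1 hs).trans (le_of_max_le_left hrd)), smul_eq_mul]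

end HilbertPolynomial

section LowVariables

open MvPolynomial

lemma lowIdeal_eq_span_X_image (k : Type) [Field k] (N e : ℕ) :
    lowIdeal k N e = Ideal.span (X '' {i : Fin N | (i : ℕ) < e}) := by
  unfold lowIdeal
  congr 1
  ext f
  simp [eq_comm]

variable {n e : ℕ}

lemma card_finsuppAntidiag_filter_val_lt (s : ℕ) :
    #(({i | (i : ℕ) < e} : Finset (Fin (n + e + 1))).finsuppAntidiag s) = e.multichoose s := by
  rw [card_finsuppAntidiag_nat_eq_multichoose, Fin.card_filter_val_lt, min_eq_right (by omega)]

lemma card_finsuppAntidiag_filter_not_val_lt (j : ℕ) :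
    #(({i | ¬ (i : ℕ) < e} : Finset (Fin (n + e + 1))).finsuppAntidiag j) = (j + n).choose n := by
  have hcard : #({i | ¬ (i : ℕ) < e} : Finset (Fin (n + e + 1))) = n + 1 := by
    have := card_filter_add_card_filter_not (s := univ) (fun i : Fin (n + e + 1) => (i : ℕ) < e)
    rw [Fin.card_filter_val_lt, card_univ, Fintype.card_fin] at this
    omega
  rw [card_finsuppAntidiag_nat_eq_choose, hcard, show n + 1 + j - 1 = j + n by omega,
    Nat.choose_symm_add]

end LowVariables

/-- `deg (S/(J^{r+1}+(uv))) = binom(e+r, e) - 1`. -/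
theorem statement2 {k : Type} [Field k] (n e r : ℕ) (he : 1 ≤ e) (hr : 1 ≤ r)
    (u v : MvPolynomial (Fin (n + e + 1)) k)
    (hu : IsMonomialSupp u (fun i => (i : ℕ) < e) r)
    (hv : ∃ dv : ℕ, 1 ≤ dv ∧ IsMonomialSupp v (fun i => e ≤ (i : ℕ)) dv) :
    HasDegree ((lowIdeal k (n + e + 1) e) ^ (r + 1) + Ideal.span {u * v}) (n + 1)
      (Nat.choose (e + r) e - 1) := by
  obtain ⟨μ, rfl, hμ, hμr⟩ := hu
  obtain ⟨d, -, ν, rfl, hν, hνd⟩ := hv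
  change μ.degree = r at hμr
  change ν.degree = d at hνd
  have hν' : ∀ i, ν i ≠ 0 → ¬ (i : ℕ) < e := fun i hi => not_lt.2 (hν i hi)
  have hI : ∀ f, f ∈ lowIdeal k (n + e + 1) e ^ (r + 1) +
        Ideal.span {monomial μ 1 * monomial ν 1} ↔
      ∀ m ∈ f.support,
        r + 1 ≤ (m.filter fun i : Fin (n + e + 1) => (i : ℕ) < e).degree ∨ μ + ν ≤ m := by
    rw [lowIdeal_eq_span_X_image, monomial_mul, one_mul]
    exact mem_span_X_image_pow_sup_span_monomial_iff _ _ _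
  have h2 : 2 ≤ (e + r).choose e := by
    have := Nat.choose_le_choose e (by omega : e + 1 ≤ e + r)
    rw [Nat.choose_succ_self_right] at this
    omega
  refine hasDegree_of_eventually_hilb_eq_sum_choose _ (r := r) (d := r + d) e.multichoose
    (by rw [Nat.sum_range_multichoose, Nat.add_comm r]; omega) (by omega) ?_
  filter_upwards [eventually_ge_atTop (r + d)] with t ht
  rw [hilb_eq_card_filter_not _ _ hI t, eq_sub_iff_add_eq]
  have := card_filter_not_add_one_le_degree_filter_or_le_add_card hμ hν' (t := t) (by omega)
  simp only [card_finsuppAntidiag_filter_val_lt, card_finsuppAntidiag_filter_not_val_lt,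
    hμr, hνd] at this
  exact_mod_cast this
end

section
/- Let $S_0 = k[x_0,\dots,x_{n+e}]$, $J = (x_0,\dots,x_{e-1})$, $u$ a monomial of degree $r$ in $x_0,\dots,x_{e-1}$, and $v$ a monomial of positive degree in $x_e,\dots,x_{n+e}$. Then $\operatorname{depth}(S_0/(J^{r+1}+(uv))) \geq n$. -/
open MvPolynomial Filter

/-!
The forms `x_{e+1} - x_e, …, x_{e+n} - x_e` are a regular sequence on `S₀/(J^{r+1} + (uv))`.
Modulo the first `t` of them, the substitution collapsing `x_{e+1}, …, x_{e+t}` onto `x_e` is a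
retraction, so each colon condition reduces to the one with no forms divided out, for the ideal
`J^s + (u v')` with `v'` the collapsed monomial. There `J^s : (x_i - x_j) = J^s`, because `J^s` is
the monomial ideal cut out by the `J`-degree and the shear `x_i ↦ x_i + x_j` preserves it; the
generator `uv` is dealt with by specialising `x_i ↦ x_j`.
-/

theorem Ideal.mem_sup_iff_mem_map {A F : Type*} [CommRing A] [FunLike F A A] [RingHomClass F A A]
    (φ : F) {I D : Ideal A} (hD : D ≤ RingHom.ker φ) (hφ : ∀ a, a - φ a ∈ D) {a : A} :
    a ∈ I ⊔ D ↔ φ a ∈ I.map φ := by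
  constructor
  · intro ha
    obtain ⟨x, hx, d, hd, rfl⟩ := Submodule.mem_sup.mp ha
    rw [map_add, RingHom.mem_ker.mp (hD hd), add_zero]
    exact Ideal.mem_map_of_mem φ hx
  · intro ha
    have hmap : I.map φ ≤ I ⊔ D := Ideal.map_le_iff_le_comap.mpr fun x hx => by
      rw [Ideal.mem_comap, ← sub_sub_cancel x (φ x)]
      exact sub_mem (Ideal.mem_sup_left hx) (Ideal.mem_sup_right (hφ x))
    rw [← sub_add_cancel a (φ a)]
    exact add_mem (Ideal.mem_sup_right (hφ a)) (hmap ha)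

open RingTheory.Sequence in
theorem Ideal.isRegular_quotient_of_mul_mem {A : Type*} [CommRing A] (I : Ideal A) (rs : List A)
    (hreg : ∀ (t : ℕ) (ht : t < rs.length) (f : A),
      rs[t] * f ∈ I ⊔ Ideal.ofList (rs.take t) → f ∈ I ⊔ Ideal.ofList (rs.take t))
    (hne : I ⊔ Ideal.ofList rs ≠ ⊤) :
    IsRegular (A ⧸ I) rs := by
  have hsmul (J : Ideal A) : (J • ⊤ : Submodule A (A ⧸ I)) = Submodule.map I.mkQ J := by
    rw [← Submodule.range_mkQ I, LinearMap.range_eq_map, ← Submodule.map_smul'', Ideal.smul_eq_mul,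
      Ideal.mul_top]
  refine ⟨⟨fun t ht => ?_⟩, fun htop => hne ?_⟩
  · let e : ((A ⧸ I) ⧸ (Ideal.ofList (rs.take t) • ⊤ : Submodule A (A ⧸ I))) ≃ₗ[A]
        A ⧸ (I ⊔ Ideal.ofList (rs.take t)) :=
      Submodule.quotEquivOfEq _ _ (hsmul _) ≪≫ₗ Submodule.quotientQuotientEquivQuotientSup I _
    rw [e.isSMulRegular_congr, isSMulRegular_quotient_iff_mem_of_smul_mem]
    exact hreg t ht
  · rw [hsmul, eq_comm, ← Submodule.comap_injective_of_surjective I.mkQ_surjective |>.eq_iff,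
      Submodule.comap_map_mkQ, Submodule.comap_top] at htop
    exact htop

lemma Finsupp.mapDomain_apply_ne_zero_notMem {σ : Type*} {s : Set σ} {τ : σ → σ}
    (hτ : ∀ l ∉ s, τ l ∉ s) {b : σ →₀ ℕ} (hb : ∀ l, b l ≠ 0 → l ∉ s) :
    ∀ l, b.mapDomain τ l ≠ 0 → l ∉ s := by
  classical
  intro l hl
  obtain ⟨l', hl', rfl⟩ := Finset.mem_image.mp (Finsupp.mapDomain_support (by simpa using hl))
  exact hτ l' (hb l' (by simpa using hl'))

namespace MvPolynomial

variable {σ R : Type*} [CommRing R] {s : Set σ}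

variable (R) in
noncomputable def idealOfVarsIn (s : Set σ) : Ideal (MvPolynomial σ R) :=
  Ideal.span (X '' s)

noncomputable def degreeIn (s : Set σ) : (σ →₀ ℕ) →+ ℕ :=
  Finsupp.weight (s.indicator 1)

lemma degreeIn_single {i : σ} (hi : i ∈ s) (c : ℕ) : degreeIn s (Finsupp.single i c) = c := by
  simp [degreeIn, Finsupp.weight_single, hi]

lemma degreeIn_eq_zero_iff {x : σ →₀ ℕ} : degreeIn s x = 0 ↔ ∀ i, x i ≠ 0 → i ∉ s := by
  simp only [degreeIn, Finsupp.weight_apply, Finsupp.sum, smul_eq_mul, Finset.sum_eq_zero_iff,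
    Finsupp.mem_support_iff, mul_eq_zero]
  refine forall_congr' fun i => imp_congr_right fun hi => ?_
  by_cases h : i ∈ s <;> simp [h, hi]

lemma one_le_degreeIn_of_mem_idealOfVarsIn {p : MvPolynomial σ R} (hp : p ∈ idealOfVarsIn R s) :
    ∀ x ∈ p.support, 1 ≤ degreeIn s x := by
  intro x hx
  obtain ⟨i, hi, hxi⟩ := mem_ideal_span_X_image.mp hp x hx
  by_contra h
  exact degreeIn_eq_zero_iff.mp (by omega) i hxi hi

lemma le_degreeIn_of_mem_pow {n : ℕ} {p : MvPolynomial σ R} (hp : p ∈ idealOfVarsIn R s ^ n) :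
    ∀ x ∈ p.support, n ≤ degreeIn s x := by
  classical
  induction n generalizing p with
  | zero => simp
  | succ n ih =>
    rw [pow_succ] at hp
    refine Submodule.mul_induction_on hp (fun q hq r hr x hx => ?_) fun q r hq hr x hx => ?_
    · obtain ⟨y, hy, z, hz, rfl⟩ := Finset.mem_add.mp (support_mul q r hx)
      have := ih hq y hy
      have := one_le_degreeIn_of_mem_idealOfVarsIn hr z hz
      rw [map_add]
      omega
    · rcases Finset.mem_union.mp (Finsupp.support_add hx) with h | h
      exacts [hq x h, hr x h]

lemma monomial_mem_pow_idealOfVarsIn {n : ℕ} {x : σ →₀ ℕ} (hx : n ≤ degreeIn s x) (c : R) :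
    monomial x c ∈ idealOfVarsIn R s ^ n := by
  classical
  induction n generalizing x with
  | zero => simp
  | succ n ih =>
    obtain ⟨i, hxi, hi⟩ : ∃ i, x i ≠ 0 ∧ i ∈ s := by
      by_contra! h
      have := degreeIn_eq_zero_iff.mpr h
      omega
    have hsplit : Finsupp.single i 1 + (x - Finsupp.single i 1) = x := by
      rw [add_tsub_cancel_of_le (Finsupp.single_le_iff.mpr (Nat.one_le_iff_ne_zero.mpr hxi))]
    have hrest : n ≤ degreeIn s (x - Finsupp.single i 1) := by
      have := congrArg (degreeIn s) hsplit
      rw [map_add, degreeIn_single hi] at this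
      omega
    rw [← hsplit, ← one_mul c, ← monomial_mul, pow_succ']
    exact Ideal.mul_mem_mul (Ideal.subset_span ⟨i, hi, rfl⟩) (ih hrest)

theorem mem_pow_idealOfVarsIn_iff {n : ℕ} {p : MvPolynomial σ R} :
    p ∈ idealOfVarsIn R s ^ n ↔ ∀ x ∈ p.support, n ≤ degreeIn s x := by
  refine ⟨le_degreeIn_of_mem_pow, fun h => ?_⟩
  rw [p.as_sum]
  exact Ideal.sum_mem _ fun x hx => monomial_mem_pow_idealOfVarsIn (h x hx) _

lemma mem_pow_of_mul_monomial_mem {n : ℕ} {b : σ →₀ ℕ} (hb : ∀ i, b i ≠ 0 → i ∉ s)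
    {p : MvPolynomial σ R} (hp : p * monomial b 1 ∈ idealOfVarsIn R s ^ n) :
    p ∈ idealOfVarsIn R s ^ n := by
  rw [mem_pow_idealOfVarsIn_iff] at hp ⊢
  intro x hx
  have hxb : x + b ∈ (p * monomial b 1).support := by
    rwa [mem_support_iff, coeff_mul_monomial, mul_one, ← mem_support_iff]
  have := hp _ hxb
  rwa [map_add, degreeIn_eq_zero_iff.mpr hb, add_zero] at this

lemma map_idealOfVarsIn {φ : MvPolynomial σ R →ₐ[R] MvPolynomial σ R}
    (hφ : ∀ i ∈ s, φ (X i) = X i) : (idealOfVarsIn R s).map φ = idealOfVarsIn R s := by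
  rw [idealOfVarsIn, Ideal.map_span, Set.image_image]
  exact congrArg Ideal.span (Set.image_congr hφ)

lemma map_mem_pow_idealOfVarsIn {φ : MvPolynomial σ R →ₐ[R] MvPolynomial σ R}
    (hφ : ∀ i ∈ s, φ (X i) = X i) {n : ℕ} {p : MvPolynomial σ R}
    (hp : p ∈ idealOfVarsIn R s ^ n) : φ p ∈ idealOfVarsIn R s ^ n := by
  rw [← map_idealOfVarsIn hφ, ← Ideal.map_pow]
  exact Ideal.mem_map_of_mem φ hp

lemma mem_pow_of_X_sub_X_mul_mem {i j : σ} (hi : i ∉ s) (hij : i ≠ j) {n : ℕ}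
    {p : MvPolynomial σ R} (hp : (X i - X j) * p ∈ idealOfVarsIn R s ^ n) :
    p ∈ idealOfVarsIn R s ^ n := by
  classical
  let shear (c : R) : MvPolynomial σ R →ₐ[R] MvPolynomial σ R :=
    aeval (Function.update X i (X i + C c * X j))
  have shear_X (c : R) : ∀ l ∈ s, shear c (X l) = X l := fun l hl => by
    simp [shear, Function.update_of_ne (ne_of_mem_of_not_mem hl hi)]
  have shear_neg (q : MvPolynomial σ R) : shear (-1) (shear 1 q) = q := by
    have : (shear (-1)).comp (shear 1) = AlgHom.id R _ := algHom_ext fun l => by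
      by_cases hl : l = i
      · subst hl; simp [shear, Function.update_of_ne hij.symm]
      · simp [shear, Function.update_of_ne hl]
    exact congr($this q)
  have hXp : shear 1 p * X i ∈ idealOfVarsIn R s ^ n := by
    have hXi : shear 1 (X i) = X i + X j := by simp [shear]
    have hXj : shear 1 (X j) = X j := by simp [shear, Function.update_of_ne hij.symm]
    have := map_mem_pow_idealOfVarsIn (shear_X 1) hp
    rwa [map_mul, map_sub, hXi, hXj, add_sub_cancel_right, mul_comm] at this
  have hsingle : ∀ l, (Finsupp.single i 1 : σ →₀ ℕ) l ≠ 0 → l ∉ s := fun l hl => by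
    obtain ⟨rfl, -⟩ := Finsupp.single_apply_ne_zero.mp hl
    exact hi
  simpa only [shear_neg] using
    map_mem_pow_idealOfVarsIn (shear_X (-1)) (mem_pow_of_mul_monomial_mem hsingle hXp)

lemma rename_monomial_of_fixed {τ : σ → σ} {a : σ →₀ ℕ} (ha : ∀ l, a l ≠ 0 → τ l = l) (r : R) :
    rename τ (monomial a r) = monomial a r := by
  rw [rename_monomial, Finsupp.mapDomain_congr (g := id) fun l hl => ha l (by simpa using hl),
    Finsupp.mapDomain_id]

lemma sub_rename_mem_span (τ : σ → σ) (p : MvPolynomial σ R) :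
    p - rename τ p ∈ Ideal.span (Set.range fun i => X i - X (τ i)) := by
  set D : Ideal (MvPolynomial σ R) := Ideal.span (Set.range fun i => X i - X (τ i))
  rw [← Ideal.Quotient.eq]
  have : (Ideal.Quotient.mkₐ R D).comp (AlgHom.id R _) = (Ideal.Quotient.mkₐ R D).comp (rename τ) :=
    algHom_ext fun i => Ideal.Quotient.eq.mpr (Ideal.subset_span ⟨i, by simp⟩)
  exact congr($this p)

lemma sub_rename_mem_span_image {τ : σ → σ} {T : Set σ} {z : σ} (hT : ∀ l ∈ T, τ l = z)
    (hTc : ∀ l ∉ T, τ l = l) (p : MvPolynomial σ R) :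
    p - rename τ p ∈ Ideal.span ((fun y => X y - X z) '' T) := by
  refine Ideal.span_le.mpr ?_ (sub_rename_mem_span τ p)
  rintro _ ⟨l, rfl⟩
  by_cases hl : l ∈ T
  · exact Ideal.subset_span ⟨l, hl, by simp only [hT l hl]⟩
  · simp [hTc l hl]

theorem mem_pow_sup_span_of_X_sub_X_mul_mem {i j : σ} (hi : i ∉ s) (hj : j ∉ s) (hij : i ≠ j)
    {n : ℕ} {a b : σ →₀ ℕ} (ha : ∀ l, a l ≠ 0 → l ∈ s) (hb : ∀ l, b l ≠ 0 → l ∉ s)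
    {g : MvPolynomial σ R}
    (hg : (X i - X j) * g ∈ idealOfVarsIn R s ^ n ⊔ Ideal.span {monomial a 1 * monomial b 1}) :
    g ∈ idealOfVarsIn R s ^ n ⊔ Ideal.span {monomial a 1 * monomial b 1} := by
  classical
  obtain ⟨q, hq, _, hp, heq⟩ := Submodule.mem_sup.mp hg
  obtain ⟨p, rfl⟩ := Ideal.mem_span_singleton'.mp hp
  set τ := Function.update id i j
  have hτ : ∀ l ≠ i, τ l = l := fun l hl => Function.update_of_ne hl _ _
  have hτi : τ i = j := Function.update_self ..
  set b' := b.mapDomain τ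
  have hb' : ∀ l, b' l ≠ 0 → l ∉ s := Finsupp.mapDomain_apply_ne_zero_notMem
    (fun l hl => by by_cases h : l = i <;> simp_all) hb
  have hρa : rename τ (monomial a (1 : R)) = monomial a 1 :=
    rename_monomial_of_fixed (fun l hl => hτ l (ne_of_mem_of_not_mem (ha l hl) hi)) 1
  -- `x_i ↦ x_j` kills `(x_i - x_j) g`, and it changes `p` only modulo `x_i - x_j`
  have hρp : rename τ p * monomial a 1 ∈ idealOfVarsIn R s ^ n := by
    refine mem_pow_of_mul_monomial_mem hb' ?_
    have h0 : rename τ ((X i - X j) * g) = 0 := by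
      rw [map_mul, map_sub, rename_X, rename_X, hτi, hτ j hij.symm, sub_self, zero_mul]
    have h1 : rename τ (q + p * (monomial a 1 * monomial b 1))
        = rename τ q + rename τ p * monomial a 1 * monomial b' 1 := by
      rw [map_add, map_mul, map_mul, hρa, rename_monomial, mul_assoc]
    rw [heq, h0] at h1
    rw [show rename τ p * monomial a 1 * monomial b' 1 = -rename τ q by linear_combination -h1]
    refine neg_mem (map_mem_pow_idealOfVarsIn (fun l hl => ?_) hq)
    rw [rename_X, hτ l (ne_of_mem_of_not_mem hl hi)]
  obtain ⟨h, hh⟩ : ∃ h, h * (X i - X j) = p - rename τ p := by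
    refine Ideal.mem_span_singleton'.mp ?_
    simpa using sub_rename_mem_span_image (T := {i}) (by simpa using hτi) (fun l hl => hτ l hl) p
  have hrest : (X i - X j) * (g - h * (monomial a 1 * monomial b 1)) ∈ idealOfVarsIn R s ^ n := by
    rw [show (X i - X j) * (g - h * (monomial a 1 * monomial b 1))
        = q + rename τ p * monomial a 1 * monomial b 1 by
      linear_combination -heq - monomial a (1 : R) * monomial b 1 * hh]
    exact add_mem hq (Ideal.mul_mem_right _ _ hρp)
  rw [← sub_add_cancel g (h * (monomial a 1 * monomial b 1))]
  exact add_mem (Ideal.mem_sup_left (mem_pow_of_X_sub_X_mul_mem hi hij hrest))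
    (Ideal.mem_sup_right (Ideal.mul_mem_left _ _ (Ideal.mem_span_singleton_self _)))

theorem mem_pow_sup_span_sup_of_X_sub_X_mul_mem {i z : σ} (hi : i ∉ s) (hz : z ∉ s) (hiz : i ≠ z)
    {T : Set σ} (hTs : Disjoint T s) (hiT : i ∉ T)
    {n : ℕ} {a b : σ →₀ ℕ} (ha : ∀ l, a l ≠ 0 → l ∈ s) (hb : ∀ l, b l ≠ 0 → l ∉ s)
    {g : MvPolynomial σ R}
    (hg : (X i - X z) * g ∈ idealOfVarsIn R s ^ n ⊔ Ideal.span {monomial a 1 * monomial b 1} ⊔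
      Ideal.span ((fun y => X y - X z) '' T)) :
    g ∈ idealOfVarsIn R s ^ n ⊔ Ideal.span {monomial a 1 * monomial b 1} ⊔
      Ideal.span ((fun y => X y - X z) '' T) := by
  classical
  set τ : σ → σ := fun l => if l ∈ T then z else l
  have hT : ∀ l ∈ T, τ l = z := fun l hl => if_pos hl
  have hTc : ∀ l ∉ T, τ l = l := fun l hl => if_neg hl
  have hτz : τ z = z := ite_self z
  have hτs : ∀ l ∈ s, rename τ (X l : MvPolynomial σ R) = X l := fun l hl => by
    rw [rename_X, hTc l (hTs.notMem_of_mem_right hl)]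
  have hD : Ideal.span ((fun y => X y - X z) '' T) ≤ RingHom.ker (rename (R := R) τ) := by
    rw [Ideal.span_le]
    rintro _ ⟨y, hy, rfl⟩
    simp [hT y hy, hτz]
  have hmap : (idealOfVarsIn R s ^ n ⊔ Ideal.span {monomial a 1 * monomial b 1}).map (rename τ)
      = idealOfVarsIn R s ^ n ⊔ Ideal.span {monomial a 1 * monomial (b.mapDomain τ) (1 : R)} := by
    rw [Ideal.map_sup, Ideal.map_pow, map_idealOfVarsIn hτs, Ideal.map_span, Set.image_singleton,
      map_mul, rename_monomial_of_fixed (fun l hl => hTc l (hTs.notMem_of_mem_right (ha l hl))),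
      rename_monomial]
  rw [Ideal.mem_sup_iff_mem_map _ hD (sub_rename_mem_span_image hT hTc), hmap] at hg ⊢
  rw [map_mul, map_sub, rename_X, rename_X, hTc i hiT, hτz] at hg
  refine mem_pow_sup_span_of_X_sub_X_mul_mem hi hz hiz ha ?_ hg
  refine Finsupp.mapDomain_apply_ne_zero_notMem (fun l hl => ?_) hb
  by_cases h : l ∈ T
  · rwa [hT l h]
  · rwa [hTc l h]

lemma idealOfVarsIn_le_ker_constantCoeff :
    idealOfVarsIn R s ≤ RingHom.ker (constantCoeff (σ := σ) (R := R)) := by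
  rw [idealOfVarsIn, Ideal.span_le]
  rintro _ ⟨i, -, rfl⟩
  simp

lemma ofList_take_ofFn_X_sub_X {n : ℕ} (y : Fin n → σ) (z : σ) (t : ℕ) :
    Ideal.ofList ((List.ofFn fun t => (X (y t) - X z : MvPolynomial σ R)).take t) =
      Ideal.span ((fun y' => X y' - X z) '' (y '' {t' | (t' : ℕ) < t})) := by
  rw [Ideal.ofList, Set.image_image]
  congr 1
  ext x
  simp only [List.mem_take_iff_getElem, List.length_ofFn, List.getElem_ofFn, Set.mem_image]
  constructor
  · rintro ⟨j, hj, rfl⟩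
    exact ⟨⟨j, by omega⟩, by simp; omega, rfl⟩
  · rintro ⟨j, hj, rfl⟩
    exact ⟨j, by simp at hj; omega, rfl⟩

theorem isRegular_ofFn_X_sub_X [Nontrivial R] {m : ℕ} (hm : m ≠ 0) {a b : σ →₀ ℕ}
    (ha : ∀ l, a l ≠ 0 → l ∈ s) (hb : ∀ l, b l ≠ 0 → l ∉ s) (hb0 : b ≠ 0)
    {n : ℕ} {y : Fin n → σ} (hy : Function.Injective y) (hys : ∀ t, y t ∉ s)
    {z : σ} (hz : z ∉ s) (hyz : ∀ t, y t ≠ z) :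
    RingTheory.Sequence.IsRegular
      (MvPolynomial σ R ⧸ (idealOfVarsIn R s ^ m ⊔ Ideal.span {monomial a 1 * monomial b 1}))
      (List.ofFn fun t => (X (y t) - X z : MvPolynomial σ R)) := by
  refine Ideal.isRegular_quotient_of_mul_mem _ _ (fun t ht f hf => ?_) fun htop => ?_
  · rw [List.getElem_ofFn] at hf
    rw [ofList_take_ofFn_X_sub_X] at hf ⊢
    refine mem_pow_sup_span_sup_of_X_sub_X_mul_mem (hys _) hz (hyz _) ?_ ?_ ha hb hf
    · exact Set.disjoint_left.mpr fun _ ⟨t', _, ht'⟩ => ht' ▸ hys t'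
    · rintro ⟨t', ht', heq⟩
      have := congrArg Fin.val (hy heq)
      simp at ht' this
      omega
  · refine RingHom.ker_ne_top (constantCoeff (σ := σ) (R := R)) (top_le_iff.mp (htop ▸ ?_))
    refine sup_le (sup_le ?_ ?_) ?_
    · exact (Ideal.pow_le_self hm).trans idealOfVarsIn_le_ker_constantCoeff
    · classical
      rw [Ideal.span_le, Set.singleton_subset_iff, SetLike.mem_coe, RingHom.mem_ker, map_mul,
        constantCoeff_monomial b, if_neg hb0, mul_zero]
    · rw [Ideal.ofList, Ideal.span_le]
      intro x hx
      obtain ⟨t, rfl⟩ := List.mem_ofFn.mp hx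
      simp

end MvPolynomial

lemma lowIdeal_eq_idealOfVarsIn (k : Type) [Field k] (N e : ℕ) :
    lowIdeal k N e = idealOfVarsIn k {i : Fin N | (i : ℕ) < e} := by
  rw [lowIdeal, idealOfVarsIn]
  congr 1
  ext f
  simp [eq_comm]

theorem statement3_general {k : Type} [Field k] (n e r : ℕ)
    (u v : MvPolynomial (Fin (n + e + 1)) k)
    (hu : IsMonomialSupp u (fun i => (i : ℕ) < e) r)
    (hv : ∃ dv : ℕ, 1 ≤ dv ∧ IsMonomialSupp v (fun i => e ≤ (i : ℕ)) dv) :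
    HasDepthGE ((lowIdeal k (n + e + 1) e) ^ (r + 1) + Ideal.span {u * v}) n := by
  obtain ⟨a, rfl, ha, -⟩ := hu
  obtain ⟨dv, hdv, b, rfl, hb, hbd⟩ := hv
  have hb0 : b ≠ 0 := by
    rintro rfl
    simp at hbd
    omega
  refine ⟨List.ofFn fun t : Fin n => X ⟨e + 1 + t, by omega⟩ - X ⟨e, by omega⟩, List.length_ofFn,
    fun x hx => ?_, ?_⟩
  · obtain ⟨t, rfl⟩ := List.mem_ofFn.mp hx
    exact sub_mem (Ideal.subset_span ⟨_, rfl⟩) (Ideal.subset_span ⟨_, rfl⟩)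
  · rw [lowIdeal_eq_idealOfVarsIn, Submodule.add_eq_sup]
    refine isRegular_ofFn_X_sub_X r.succ_ne_zero ha (fun l hl => (hb l hl).not_gt) hb0
      (fun t t' h => ?_) (fun t => ?_) (lt_irrefl e) (fun t h => ?_)
    · simpa [Fin.ext_iff] using h
    · change ¬ e + 1 + t < e
      omega
    · simp only [Fin.ext_iff] at h
      omega

/-- `depth (S/(J^{r+1}+(uv))) ≥ n`. -/
theorem statement3 {k : Type} [Field k] (n e r : ℕ) (he : 1 ≤ e)
    (u v : MvPolynomial (Fin (n + e + 1)) k)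
    (hu : IsMonomialSupp u (fun i => (i : ℕ) < e) r)
    (hv : ∃ dv : ℕ, 1 ≤ dv ∧ IsMonomialSupp v (fun i => e ≤ (i : ℕ)) dv) :
    HasDepthGE ((lowIdeal k (n + e + 1) e) ^ (r + 1) + Ideal.span {u * v}) n :=
  statement3_general n e r u v hu hv
end
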